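/- Let C be a coloration of W_τ(X) and let V be a variety of type τ (i.e. Mod Id V = V). Then the following statements are equivalent: (i) CMod Id V = V; (ii) Id V = CId V; (iii) χ_C^E[Id V] = Id V. Moreover, each of (i)–(iii) implies both V = CMod CId V and χ_C^A[V] = V. -/

import Mathlib

/-!
Common framework: terms of a fixed type `τ = (ar i)_{i : I}`, algebras,
identities, hypersubstitutions, multi-hypersubstitutions and colorations,
following Denecke–Koppitz–Shtrakov, "Multi-hypersubstitutions and colored
solid varieties".
-/

namespace ColoredSolid

/-- Terms of type `τ` (arities `ar`) over the countably infinite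
variable set `X = {x₀, x₁, …}` (variables indexed by `ℕ`). -/
inductive Term (I : Type) (ar : I → ℕ) : Type
  | var : ℕ → Term I ar
  | app : (i : I) → (Fin (ar i) → Term I ar) → Term I ar

variable {I : Type} {ar : I → ℕ}

/-- The set of (indices of) variables occurring in a term. -/
def Term.varSet : Term I ar → Set ℕ
  | .var n => {n}
  | .app _ ts => ⋃ k, (ts k).varSet

/-- Simultaneous substitution of terms for variables. -/
def subst (θ : ℕ → Term I ar) : Term I ar → Term I ar
  | .var n => θ n
  | .app i ts => .app i fun k => subst θ (ts k)

/-- Pad a `Fin (ar i)`-indexed family of terms to a total substitution. -/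
def pad {i : I} (g : Fin (ar i) → Term I ar) : ℕ → Term I ar :=
  fun j => if h : j < ar i then g ⟨j, h⟩ else .var j

/-- The extension `σ̂` of a hypersubstitution to all terms. -/
def hat (σ : (i : I) → Term I ar) : Term I ar → Term I ar
  | .var n => .var n
  | .app i ts => subst (pad fun k => hat σ (ts k)) (σ i)

/-- A hypersubstitution is proper when each `σ(fᵢ)` is an `nᵢ`-ary term,
i.e. uses only the variables `x₀, …, x_{nᵢ-1}`. -/
def Proper (σ : (i : I) → Term I ar) : Prop :=
  ∀ i, ∀ n ∈ (σ i).varSet, n < ar i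

/-- `Hyp I ar` : the hypersubstitutions of type `τ`. -/
def Hyp (I : Type) (ar : I → ℕ) : Type := {σ : (i : I) → Term I ar // Proper σ}

/-- The identity hypersubstitution (as a raw function). -/
def hypIdFun : (i : I) → Term I ar := fun i => .app i fun k => .var k.val

lemma proper_hypIdFun : Proper (hypIdFun (I := I) (ar := ar)) := by
  intro i n hn
  simp only [hypIdFun, Term.varSet, Set.mem_iUnion, Set.mem_singleton_iff] at hn
  obtain ⟨k, rfl⟩ := hn
  exact k.isLt

/-- The identity hypersubstitution `σ_id`. -/
def hypId : Hyp I ar := ⟨hypIdFun, proper_hypIdFun⟩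

lemma varSet_subst (θ : ℕ → Term I ar) (t : Term I ar) :
    (subst θ t).varSet ⊆ ⋃ n ∈ t.varSet, (θ n).varSet := by
  induction t with
  | var n => simp [subst, Term.varSet]
  | app i ts ih =>
    intro m hm
    simp only [subst, Term.varSet, Set.mem_iUnion] at hm
    obtain ⟨k, hk⟩ := hm
    have := ih k hk
    simp only [Set.mem_iUnion, Term.varSet] at this ⊢
    obtain ⟨n, hn1, hn2⟩ := this
    exact ⟨n, ⟨⟨k, hn1⟩, hn2⟩⟩

lemma varSet_hat {σ : (i : I) → Term I ar} (hσ : Proper σ) :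
    ∀ t : Term I ar, (hat σ t).varSet ⊆ t.varSet := by
  intro t
  induction t with
  | var n => simp [hat]
  | app i ts ih =>
    intro m hm
    rw [hat] at hm
    have hmem := varSet_subst _ _ hm
    simp only [Set.mem_iUnion] at hmem
    obtain ⟨n, hn, hm2⟩ := hmem
    have hlt := hσ i n hn
    simp only [pad, dif_pos hlt] at hm2
    have := ih ⟨n, hlt⟩ hm2
    simp only [Term.varSet, Set.mem_iUnion]
    exact ⟨⟨n, hlt⟩, this⟩

/-- Composition of hypersubstitutions (raw functions): `σ₁ ∘ₕ σ₂`. -/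
def hypCompFun (σ₁ σ₂ : (i : I) → Term I ar) : (i : I) → Term I ar := fun i => hat σ₁ (σ₂ i)

lemma proper_hypCompFun {σ₁ σ₂ : (i : I) → Term I ar} (h₁ : Proper σ₁) (h₂ : Proper σ₂) :
    Proper (hypCompFun σ₁ σ₂) :=
  fun i n hn => h₂ i n (varSet_hat h₁ (σ₂ i) hn)

/-- Composition of hypersubstitutions: `σ₁ ∘ₕ σ₂ := σ̂₁ ∘ σ₂`. -/
def hypComp (σ₁ σ₂ : Hyp I ar) : Hyp I ar :=
  ⟨hypCompFun σ₁.val σ₂.val, proper_hypCompFun σ₁.property σ₂.property⟩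

/-- `M` is a submonoid of the monoid `Hyp(τ)` of all hypersubstitutions. -/
def IsSubmonoid (M : Set (Hyp I ar)) : Prop :=
  hypId ∈ M ∧ ∀ σ₁ ∈ M, ∀ σ₂ ∈ M, hypComp σ₁ σ₂ ∈ M

/-- An algebra of type `τ`: a (nonempty) carrier together with an
`nᵢ`-ary operation for every operation symbol `fᵢ`. -/
structure Alg (I : Type) (ar : I → ℕ) where
  carrier : Type
  nonempty : Nonempty carrier
  op : ∀ i, (Fin (ar i) → carrier) → carrier

/-- Evaluation of a term in an algebra under a valuation of the variables. -/
def Alg.eval (A : Alg I ar) (v : ℕ → A.carrier) : Term I ar → A.carrier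
  | .var n => v n
  | .app i ts => A.op i fun k => A.eval v (ts k)

/-- Identities `s ≈ t` are pairs of terms. -/
abbrev Eqn (I : Type) (ar : I → ℕ) := Term I ar × Term I ar

/-- The identity `e` holds in the algebra `A`. -/
def holds (A : Alg I ar) (e : Eqn I ar) : Prop :=
  ∀ v : ℕ → A.carrier, A.eval v e.1 = A.eval v e.2

/-- `Id K` : the identities holding in every algebra of the class `K`. -/
def IdS (K : Set (Alg I ar)) : Set (Eqn I ar) := {e | ∀ A ∈ K, holds A e}

/-- `Mod Σ` : the class of algebras satisfying every identity of `Σ`. -/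
def ModS (E : Set (Eqn I ar)) : Set (Alg I ar) := {A | ∀ e ∈ E, holds A e}

/-- `χ_M^E[Σ] = {σ̂[u] ≈ σ̂[v] | u ≈ v ∈ Σ, σ ∈ M}`. -/
def chiE (M : Set (Hyp I ar)) (E : Set (Eqn I ar)) : Set (Eqn I ar) :=
  {e | ∃ σ ∈ M, ∃ uv ∈ E, e = (hat σ.val uv.1, hat σ.val uv.2)}

/-- The derived algebra `σ(𝒜)` (same carrier, operations `σ(fᵢ)^𝒜`). -/
noncomputable def derive (σ : (i : I) → Term I ar) (A : Alg I ar) : Alg I ar where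
  carrier := A.carrier
  nonempty := A.nonempty
  op i args := A.eval
    (fun j => if h : j < ar i then args ⟨j, h⟩ else Classical.choice A.nonempty) (σ i)

/-- `χ_M^A[K] = {σ(𝒜) | 𝒜 ∈ K, σ ∈ M}`. -/
def chiA (M : Set (Hyp I ar)) (K : Set (Alg I ar)) : Set (Alg I ar) :=
  {B | ∃ σ ∈ M, ∃ A ∈ K, B = derive σ.val A}

/-- `H_M Id K` : the `M`-hyperidentities of the class `K`. -/
def HId (M : Set (Hyp I ar)) (K : Set (Alg I ar)) : Set (Eqn I ar) :=
  {e | ∀ σ ∈ M, (hat σ.val e.1, hat σ.val e.2) ∈ IdS K}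

/-- `H_M Mod Σ` : the algebras `M`-hypersatisfying every identity of `Σ`. -/
def HMod (M : Set (Hyp I ar)) (E : Set (Eqn I ar)) : Set (Alg I ar) :=
  {A | ∀ σ ∈ M, ∀ uv ∈ E, holds A (hat σ.val uv.1, hat σ.val uv.2)}

/-!  Colorations and multi-hypersubstitutions. -/

/-- `addresses t` : the set of addresses of occurrences of operation symbols
in the term `t` (an address is the list of argument positions leading from
the root to the occurrence). -/
def addresses : Term I ar → Set (List ℕ)
  | .var _ => ∅
  | .app i ts => insert [] (⋃ k : Fin (ar i), (fun l => k.val :: l) '' addresses (ts k))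

/-- A coloration `C` of `W_τ(X)` assigns to every term `t` a coloration
`α_t` of its addresses (only the values on `addresses t` matter). -/
def Coloration (I : Type) (ar : I → ℕ) : Type := Term I ar → List ℕ → ℕ

/-- A multi-hypersubstitution is a map `ρ : ℕ → Hyp(τ)`; here, its
underlying raw function is extended to the subterms of a term, tracking the
address of the current subterm, with colors given by `α`. -/
def mhatAux (ρ : ℕ → (i : I) → Term I ar) (α : List ℕ → ℕ) : List ℕ → Term I ar → Term I ar
  | _, .var n => .var n
  | a, .app i ts =>
      subst (pad fun k => mhatAux ρ α (a ++ [k.val]) (ts k)) (ρ (α a) i)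

/-- `ρ̂_C[t]` : application of the multi-hypersubstitution `ρ` to the term
`t`, colored by `C`. -/
def mhat (C : Coloration I ar) (ρ : ℕ → Hyp I ar) (t : Term I ar) : Term I ar :=
  mhatAux (fun n => (ρ n).val) (C t) [] t

/-- `χ_C^e[Σ] = {ρ̂_C[u] ≈ ρ̂_C[v] | u ≈ v ∈ Σ, ρ ∈ Hyp(τ)^ℕ}`. -/
def chiCe (C : Coloration I ar) (E : Set (Eqn I ar)) : Set (Eqn I ar) :=
  {e | ∃ ρ : ℕ → Hyp I ar, ∃ uv ∈ E, e = (mhat C ρ uv.1, mhat C ρ uv.2)}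

/-- The iterates `χ_C^{e,n}` of `χ_C^e` (with `χ_C^{e,0} = χ_C^e`). -/
def chiCiter (C : Coloration I ar) : ℕ → Set (Eqn I ar) → Set (Eqn I ar)
  | 0, E => chiCe C E
  | n + 1, E => chiCe C (chiCiter C n E)

/-- `χ_C^E[Σ] = ⋃ₙ χ_C^{e,n}[Σ]`. -/
def chiCE (C : Coloration I ar) (E : Set (Eqn I ar)) : Set (Eqn I ar) :=
  ⋃ n, chiCiter C n E

/-- The derived algebra `ρ[𝒜]`, with operations
`fᵢ^{ρ[𝒜]} := (ρ̂_C[fᵢ(x₁,…,x_{nᵢ})])^𝒜`. -/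
noncomputable def deriveC (C : Coloration I ar) (ρ : ℕ → Hyp I ar) (A : Alg I ar) :
    Alg I ar where
  carrier := A.carrier
  nonempty := A.nonempty
  op i args := A.eval
    (fun j => if h : j < ar i then args ⟨j, h⟩ else Classical.choice A.nonempty)
    (mhat C ρ (.app i fun k => .var k.val))

/-- `χ_C^A[K] = {ρ[𝒜] | 𝒜 ∈ K, ρ ∈ Hyp(τ)^ℕ}`. -/
def chiCA (C : Coloration I ar) (K : Set (Alg I ar)) : Set (Alg I ar) :=
  {B | ∃ ρ : ℕ → Hyp I ar, ∃ A ∈ K, B = deriveC C ρ A}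

/-- `CMod Σ = {𝒜 | χ_C^E[Σ] ⊆ Id 𝒜}`. -/
def CMod (C : Coloration I ar) (E : Set (Eqn I ar)) : Set (Alg I ar) :=
  {A | chiCE C E ⊆ {e | holds A e}}

/-- `CId K = {s ≈ t | χ_C^E[{s ≈ t}] ⊆ Id K}`. -/
def CId (C : Coloration I ar) (K : Set (Alg I ar)) : Set (Eqn I ar) :=
  {e | chiCE C {e} ⊆ IdS K}

variable {I : Type} {ar : I → ℕ}

/-! Each of (i)–(iii) says that `Id V` is closed under `χ_C^E`: the operator `χ_C^E` is
extensive and monotone, and `χ_C^E[Σ]` is the union of the `χ_C^E[{e}]` for `e ∈ Σ`, so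
`χ_C^E[Σ] ⊆ Id K` exactly when `Σ ⊆ CId K`. For `χ_C^A[V] = V`, note that `ρ[𝒜]` only reads
the colours at the roots of the terms `fᵢ(x₁, …, x_{nᵢ})`; hence it is the derived algebra
`σ(𝒜)` of a single hypersubstitution `σ`, and `σ(𝒜)` satisfies `u ≈ v` as soon as `𝒜`
satisfies `σ̂[u] ≈ σ̂[v]`, which lies in `χ_C^E[Id V]`. -/

lemma eval_congr (A : Alg I ar) {v w : ℕ → A.carrier} (t : Term I ar)
    (h : ∀ n ∈ t.varSet, v n = w n) : A.eval v t = A.eval w t := by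
  induction t with
  | var n => exact h n rfl
  | app i ts ih =>
    simp only [Alg.eval]
    congr 1
    funext k
    exact ih k fun n hn => h n (Set.mem_iUnion.2 ⟨k, hn⟩)

lemma eval_subst (A : Alg I ar) (v : ℕ → A.carrier) (θ : ℕ → Term I ar) (t : Term I ar) :
    A.eval v (subst θ t) = A.eval (fun n => A.eval v (θ n)) t := by
  induction t with
  | var n => rfl
  | app i ts ih =>
    simp only [subst, Alg.eval]
    congr 1
    funext k
    exact ih k

lemma subst_var (t : Term I ar) : subst Term.var t = t := by
  induction t with
  | var n => rfl
  | app i ts ih =>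
    simp only [subst]
    congr 1
    funext k
    exact ih k

lemma hat_hypIdFun (t : Term I ar) : hat hypIdFun t = t := by
  induction t with
  | var n => rfl
  | app i ts ih =>
    rw [hat]
    show subst _ (.app i fun k => .var k.val) = _
    simp only [subst]
    congr 1
    funext k
    simp only [pad, dif_pos k.isLt, Fin.eta]
    exact ih k

lemma eval_derive (σ : Hyp I ar) (A : Alg I ar) (v : ℕ → A.carrier) (t : Term I ar) :
    (derive σ.val A).eval v t = A.eval v (hat σ.val t) := by
  induction t with
  | var n => rfl
  | app i ts ih =>
    show A.eval (fun j => if h : j < ar i then (derive σ.val A).eval v (ts ⟨j, h⟩)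
        else Classical.choice A.nonempty) (σ.val i) = _
    rw [hat, eval_subst]
    apply eval_congr
    intro n hn
    have hlt := σ.property i n hn
    simp only [pad, dif_pos hlt]
    exact (dif_pos hlt).trans (ih _)

lemma holds_derive_iff (σ : Hyp I ar) (A : Alg I ar) (e : Eqn I ar) :
    holds (derive σ.val A) e ↔ holds A (hat σ.val e.1, hat σ.val e.2) := by
  show (∀ v : ℕ → A.carrier, (derive σ.val A).eval v e.1 = (derive σ.val A).eval v e.2) ↔ _
  simp only [eval_derive]
  rfl

lemma derive_hypIdFun (A : Alg I ar) : derive hypIdFun A = A := by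
  obtain ⟨carrier, nonempty, op⟩ := A
  simp only [derive, hypIdFun, Alg.eval]
  congr 1
  funext i args
  congr 1
  funext k
  simp [k.isLt]

lemma mhatAux_const (σ : (i : I) → Term I ar) (α : List ℕ → ℕ) (a : List ℕ) (t : Term I ar) :
    mhatAux (fun _ => σ) α a t = hat σ t := by
  induction t generalizing a with
  | var n => rfl
  | app i ts ih =>
    rw [mhatAux, hat]
    congr 1
    funext j
    simp only [pad]
    split
    · exact ih _ _
    · rfl

lemma mhat_const (C : Coloration I ar) (σ : Hyp I ar) (t : Term I ar) :
    mhat C (fun _ => σ) t = hat σ.val t :=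
  mhatAux_const σ.val (C t) [] t

section Closure

variable {C : Coloration I ar} {E : Set (Eqn I ar)} {K : Set (Alg I ar)}

lemma hat_mem_chiCE (σ : Hyp I ar) {e : Eqn I ar} (he : e ∈ E) :
    (hat σ.val e.1, hat σ.val e.2) ∈ chiCE C E :=
  Set.mem_iUnion.2 ⟨0, fun _ => σ, e, he, by rw [mhat_const, mhat_const]⟩

lemma subset_chiCE : E ⊆ chiCE C E := fun e he => by
  simpa only [hypId, hat_hypIdFun] using hat_mem_chiCE (C := C) hypId he

lemma chiCe_mono {F : Set (Eqn I ar)} (h : E ⊆ F) : chiCe C E ⊆ chiCe C F := by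
  rintro _ ⟨ρ, uv, huv, rfl⟩
  exact ⟨ρ, uv, h huv, rfl⟩

lemma chiCiter_mono {F : Set (Eqn I ar)} (h : E ⊆ F) (n : ℕ) :
    chiCiter C n E ⊆ chiCiter C n F := by
  induction n with
  | zero => exact chiCe_mono h
  | succ n ih => exact chiCe_mono ih

lemma exists_mem_chiCiter_singleton {e' : Eqn I ar} (n : ℕ) (h : e' ∈ chiCiter C n E) :
    ∃ e ∈ E, e' ∈ chiCiter C n {e} := by
  induction n generalizing e' with
  | zero =>
    obtain ⟨ρ, uv, huv, rfl⟩ := h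
    exact ⟨uv, huv, ρ, uv, rfl, rfl⟩
  | succ n ih =>
    obtain ⟨ρ, uv, huv, rfl⟩ := h
    obtain ⟨e, he, huv'⟩ := ih huv
    exact ⟨e, he, ρ, uv, huv', rfl⟩

lemma chiCE_subset_IdS_iff : chiCE C E ⊆ IdS K ↔ E ⊆ CId C K := by
  constructor
  · intro h e he e' he'
    obtain ⟨n, hn⟩ := Set.mem_iUnion.1 he'
    exact h (Set.mem_iUnion.2 ⟨n, chiCiter_mono (Set.singleton_subset_iff.2 he) n hn⟩)
  · intro h e' he'
    obtain ⟨n, hn⟩ := Set.mem_iUnion.1 he'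
    obtain ⟨e, he, hn'⟩ := exists_mem_chiCiter_singleton n hn
    exact h he (Set.mem_iUnion.2 ⟨n, hn'⟩)

lemma CId_subset_IdS : CId C K ⊆ IdS K := fun _ he => he (subset_chiCE rfl)

lemma subset_CMod_iff : K ⊆ CMod C E ↔ chiCE C E ⊆ IdS K :=
  ⟨fun h _ he _ hA => h hA he, fun h _ hA _ he => h he _ hA⟩

lemma CMod_subset_ModS : CMod C E ⊆ ModS E := fun _ hA _ he => hA (subset_chiCE he)

lemma chiCE_IdS_eq_iff : chiCE C (IdS K) = IdS K ↔ chiCE C (IdS K) ⊆ IdS K :=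
  ⟨Eq.subset, fun h => h.antisymm subset_chiCE⟩

lemma IdS_eq_CId_iff : IdS K = CId C K ↔ chiCE C (IdS K) ⊆ IdS K := by
  rw [chiCE_subset_IdS_iff]
  exact ⟨Eq.subset, fun h => h.antisymm CId_subset_IdS⟩

lemma CMod_IdS_eq_iff (hK : ModS (IdS K) = K) :
    CMod C (IdS K) = K ↔ chiCE C (IdS K) ⊆ IdS K := by
  rw [← subset_CMod_iff]
  exact ⟨fun h => h.symm.subset, fun h => (CMod_subset_ModS.trans hK.subset).antisymm h⟩

end Closure

section DerivedAlgebras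

def rootHyp (C : Coloration I ar) (ρ : ℕ → Hyp I ar) : Hyp I ar :=
  ⟨fun i => (ρ (C (hypIdFun i) [])).val i, fun i => (ρ _).property i⟩

lemma mhat_hypIdFun (C : Coloration I ar) (ρ : ℕ → Hyp I ar) (i : I) :
    mhat C ρ (hypIdFun i) = (rootHyp C ρ).val i := by
  rw [hypIdFun, mhat, mhatAux]
  have hpad : (pad fun k : Fin (ar i) => mhatAux (fun n => (ρ n).val)
      (C (.app i fun k => .var k.val)) ([] ++ [k.val]) (.var k.val)) = Term.var := by
    funext j
    simp only [pad, mhatAux, dite_eq_ite, ite_self]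
  rw [hpad, subst_var]
  rfl

lemma deriveC_eq_derive (C : Coloration I ar) (ρ : ℕ → Hyp I ar) (A : Alg I ar) :
    deriveC C ρ A = derive (rootHyp C ρ).val A := by
  simp only [deriveC, derive, ← mhat_hypIdFun]
  rfl

lemma subset_chiCA (C : Coloration I ar) (K : Set (Alg I ar)) : K ⊆ chiCA C K :=
  fun A hA => ⟨fun _ => hypId, A, hA, by rw [deriveC_eq_derive]; exact (derive_hypIdFun A).symm⟩

lemma chiCA_subset_ModS_IdS {C : Coloration I ar} {K : Set (Alg I ar)}
    (h : chiCE C (IdS K) ⊆ IdS K) : chiCA C K ⊆ ModS (IdS K) := by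
  rintro _ ⟨ρ, A, hA, rfl⟩ e he
  rw [deriveC_eq_derive, holds_derive_iff]
  exact h (hat_mem_chiCE (rootHyp C ρ) he) A hA

end DerivedAlgebras

/-- Theorem 5.1: for a variety `V`, conditions (i)–(iii)
are equivalent, and each of them implies both `V = CMod CId V` and
`χ_C^A[V] = V`. -/
theorem colored_solid_tfae
    (C : Coloration I ar) (V : Set (Alg I ar)) (hV : ModS (IdS V) = V) :
    ([CMod C (IdS V) = V,
      IdS V = CId C V,
      chiCE C (IdS V) = IdS V].TFAE) ∧
    (chiCE C (IdS V) = IdS V →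
      V = CMod C (CId C V) ∧ chiCA C V = V) := by
  refine ⟨?_, fun hsolid => ?_⟩
  · tfae_have 1 ↔ 3 := (CMod_IdS_eq_iff hV).trans chiCE_IdS_eq_iff.symm
    tfae_have 2 ↔ 3 := IdS_eq_CId_iff.trans chiCE_IdS_eq_iff.symm
    tfae_finish
  · have hclosed := chiCE_IdS_eq_iff.1 hsolid
    refine ⟨?_, ?_⟩
    · rw [← IdS_eq_CId_iff.2 hclosed, (CMod_IdS_eq_iff hV).2 hclosed]
    · exact (hV ▸ chiCA_subset_ModS_IdS hclosed).antisymm (subset_chiCA C V)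

end ColoredSolid
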